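/- arXiv:2504.09959 — 3 statements merged into one kernel-verified Lean document; each statement's English description precedes it below -/
import Mathlib

section
/- Let k2, k3, k4 > 0 and define k := (k2+k3+k4)/2, α1 := -k + sqrt(k² - k2·k4), α2 := -k - sqrt(k² - k2·k4). Then α2 < -k2 < α1 < 0. -/
/-!
The numbers `-k ± √(k² - k₂k₄)` are the roots of `q(t) = t² + (k₂ + k₃ + k₄) t + k₂k₄`.
Since `q(-k₂) = -k₂k₃ < 0`, the point `-k₂` lies strictly between them, and since the product
`k₂k₄` of the roots is positive while their sum `-2k` is negative, both roots are negative.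
-/

namespace Real

lemma neg_sub_sqrt_lt_and_lt_neg_add_sqrt {k c t : ℝ} (h : t ^ 2 + 2 * k * t + c < 0) :
    -k - √(k ^ 2 - c) < t ∧ t < -k + √(k ^ 2 - c) := by
  have hdist : |t + k| < √(k ^ 2 - c) :=
    (lt_sqrt (abs_nonneg _)).2 (by rw [sq_abs]; linarith)
  constructor <;> linarith [abs_lt.1 hdist]

lemma neg_add_sqrt_sq_sub_lt_zero {k c : ℝ} (hk : 0 < k) (hc : 0 < c) :
    -k + √(k ^ 2 - c) < 0 := by
  have : √(k ^ 2 - c) < k := (sqrt_lt' hk).2 (by linarith)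
  linarith

end Real

theorem stmt_2 (k2 k3 k4 : ℝ) (h2 : 0 < k2) (h3 : 0 < k3) (h4 : 0 < k4) :
    (-(k2 + k3 + k4) / 2 - Real.sqrt (((k2 + k3 + k4) / 2) ^ 2 - k2 * k4)) < -k2 ∧
    -k2 < (-(k2 + k3 + k4) / 2 + Real.sqrt (((k2 + k3 + k4) / 2) ^ 2 - k2 * k4)) ∧
    (-(k2 + k3 + k4) / 2 + Real.sqrt (((k2 + k3 + k4) / 2) ^ 2 - k2 * k4)) < 0 := by
  simp only [neg_div]
  set k := (k2 + k3 + k4) / 2 with hk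
  have hq : (-k2) ^ 2 + 2 * k * (-k2) + k2 * k4 < 0 := by
    have hval : (-k2) ^ 2 + 2 * k * (-k2) + k2 * k4 = -(k2 * k3) := by rw [hk]; ring
    linarith [mul_pos h2 h3]
  obtain ⟨hleft, hright⟩ := Real.neg_sub_sqrt_lt_and_lt_neg_add_sqrt hq
  exact ⟨hleft, hright, Real.neg_add_sqrt_sq_sub_lt_zero (by positivity) (mul_pos h2 h4)⟩
end

section
/- Let m1,…,mp, T ∈ ℕ with 2(m1+⋯+mp) ≤ T and let t1 < ⋯ < t_T be real numbers. Suppose G(t) = Σ_{j=1}^p P_j(t)e^{μ_j t} and G̃(t) = Σ_{j=1}^p P̃_j(t)e^{μ̃_j t}, where P_j, P̃_j are polynomials of degree at most m_j - 1, the μ_j are pairwise distinct, and the μ̃_j are pairwise distinct. If G(t_l) = G̃(t_l) for l = 1,…,T, then after a suitable re-indexing, P_j = P̃_j for all j, and μ_j = μ̃_j for all j with P_j ≢ 0. -/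
/-!
Write `G - G̃ = ∑_ν Q_ν(t) e^{νt}` over the union of the exponents; its weight
`∑ (deg Q_ν + 1)`, taken over the nonzero `Q_ν`, is at most `2 ∑ m_j ≤ T`. A nonzero
exponential polynomial of weight `n` has fewer than `n` real zeros: for an exponent `c` with
`Q_c ≠ 0`, the derivative of `e^{-ct} ∑ Q_ν(t) e^{νt}` is `e^{-ct}` times an exponential
polynomial of smaller weight, and by Rolle's theorem it loses at most one zero. Hence every `Q_ν`
vanishes, so `G` and `G̃` have the same nonzero terms, and matching the exponents gives the
re-indexing.
-/

open Polynomial Finset Function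

section PolyWeight

variable {R : Type*} [Semiring R]

open Classical in
noncomputable def polyWeight (q : R[X]) : ℕ := if q = 0 then 0 else q.natDegree + 1

theorem polyWeight_zero : polyWeight (0 : R[X]) = 0 := by simp [polyWeight]

theorem polyWeight_of_ne_zero {q : R[X]} (hq : q ≠ 0) : polyWeight q = q.natDegree + 1 := by
  simp [polyWeight, hq]

theorem polyWeight_eq_zero_iff {q : R[X]} : polyWeight q = 0 ↔ q = 0 := by
  by_cases hq : q = 0 <;> simp [polyWeight, hq]

theorem polyWeight_le_of_natDegree_lt {q : R[X]} {m : ℕ} (h : q.natDegree < m) :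
    polyWeight q ≤ m := by
  unfold polyWeight; split_ifs <;> omega

theorem polyWeight_le_of_natDegree_le {p q : R[X]} (hq : q ≠ 0) (h : p.natDegree ≤ q.natDegree) :
    polyWeight p ≤ polyWeight q := by
  rw [polyWeight_of_ne_zero hq]
  exact polyWeight_le_of_natDegree_lt (Nat.lt_succ_of_le h)

theorem polyWeight_derivative_lt {q : R[X]} (hq : q ≠ 0) :
    polyWeight (derivative q) < polyWeight q := by
  rw [polyWeight_of_ne_zero hq]
  by_cases hd : derivative q = 0
  · simp [hd, polyWeight_zero]
  · have hdeg : q.natDegree ≠ 0 := fun h => hd (derivative_of_natDegree_zero h)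
    rw [polyWeight_of_ne_zero hd]
    have := natDegree_derivative_lt hdeg
    omega

theorem polyWeight_derivative_add_C_mul_le (q : R[X]) (a : R) :
    polyWeight (derivative q + C a * q) ≤ polyWeight q := by
  by_cases hq : q = 0
  · simp [hq]
  exact polyWeight_le_of_natDegree_le hq <| (natDegree_add_le _ _).trans <|
    max_le (natDegree_derivative_le q |>.trans (Nat.sub_le _ _)) (natDegree_C_mul_le a q)

end PolyWeight

section PolyWeightRing

variable {R : Type*} [Ring R]

theorem polyWeight_neg (q : R[X]) : polyWeight (-q) = polyWeight q := by
  unfold polyWeight; split_ifs <;> simp_all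

theorem polyWeight_sub_le (p q : R[X]) : polyWeight (p - q) ≤ polyWeight p + polyWeight q := by
  by_cases hp : p = 0
  · simp [hp, polyWeight_neg]
  by_cases hq : q = 0
  · simp [hq]
  refine polyWeight_le_of_natDegree_lt ((natDegree_sub_le p q).trans_lt ?_)
  rw [polyWeight_of_ne_zero hp, polyWeight_of_ne_zero hq]
  omega

theorem eq_zero_of_derivative_add_C_mul_eq_zero [NoZeroDivisors R] {q : R[X]} {a : R}
    (ha : a ≠ 0) (h : derivative q + C a * q = 0) : q = 0 := by
  have hlead := congrArg (coeff · q.natDegree) h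
  simp only [coeff_add, coeff_derivative, coeff_C_mul, coeff_zero,
    coeff_eq_zero_of_natDegree_lt (Nat.lt_succ_self _), zero_mul, zero_add] at hlead
  exact leadingCoeff_eq_zero.mp ((mul_eq_zero.mp hlead).resolve_left ha)

end PolyWeightRing

section ExpPoly

noncomputable def expPoly (s : Finset ℝ) (Q : ℝ → ℝ[X]) (x : ℝ) : ℝ :=
  ∑ ν ∈ s, (Q ν).eval x * Real.exp (ν * x)

noncomputable def expPolyWeight (s : Finset ℝ) (Q : ℝ → ℝ[X]) : ℕ := ∑ ν ∈ s, polyWeight (Q ν)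

/-- The coefficients of `F' - c F` when `F = expPoly s Q`. -/
noncomputable def expPolyDerivSub (c : ℝ) (Q : ℝ → ℝ[X]) (ν : ℝ) : ℝ[X] :=
  derivative (Q ν) + C (ν - c) * Q ν

variable {s : Finset ℝ} {Q : ℝ → ℝ[X]}

theorem expPoly_sub (Q₁ Q₂ : ℝ → ℝ[X]) (x : ℝ) :
    expPoly s (Q₁ - Q₂) x = expPoly s Q₁ x - expPoly s Q₂ x := by
  simp only [expPoly, Pi.sub_apply, eval_sub, sub_mul, sum_sub_distrib]

theorem expPolyWeight_sub_le (Q₁ Q₂ : ℝ → ℝ[X]) :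
    expPolyWeight s (Q₁ - Q₂) ≤ expPolyWeight s Q₁ + expPolyWeight s Q₂ := by
  rw [expPolyWeight, expPolyWeight, expPolyWeight, ← sum_add_distrib]
  exact sum_le_sum fun ν _ => polyWeight_sub_le _ _

theorem hasDerivAt_exp_mul_expPoly (c x : ℝ) :
    HasDerivAt (fun y => Real.exp (-(c * y)) * expPoly s Q y)
      (Real.exp (-(c * x)) * expPoly s (expPolyDerivSub c Q) x) x := by
  have hterm : ∀ ν ∈ s, HasDerivAt (fun y => (Q ν).eval y * Real.exp (ν * y))
      ((Q ν).derivative.eval x * Real.exp (ν * x) + (Q ν).eval x * (Real.exp (ν * x) * ν)) x :=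
    fun ν _ => ((Q ν).hasDerivAt x).mul (by simpa using ((hasDerivAt_id x).const_mul ν).exp)
  have hexp : HasDerivAt (fun y => Real.exp (-(c * y))) (Real.exp (-(c * x)) * -c) x := by
    simpa using ((hasDerivAt_id x).const_mul c).neg.exp
  refine (hexp.mul (HasDerivAt.fun_sum hterm)).congr_deriv ?_
  simp only [expPoly, expPolyDerivSub, mul_sum, ← sum_add_distrib, eval_add, eval_mul, eval_C]
  exact sum_congr rfl fun ν _ => by ring

theorem expPolyWeight_expPolyDerivSub_lt {c : ℝ} (hc : c ∈ s) (hQc : Q c ≠ 0) :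
    expPolyWeight s (expPolyDerivSub c Q) < expPolyWeight s Q := by
  refine sum_lt_sum (fun ν _ => polyWeight_derivative_add_C_mul_le _ _) ⟨c, hc, ?_⟩
  simpa [expPolyDerivSub] using polyWeight_derivative_lt hQc

theorem expPoly_ne_zero_of_expPolyDerivSub_eq_zero {c : ℝ} (hc : c ∈ s) (hQc : Q c ≠ 0)
    (hD : ∀ ν ∈ s, expPolyDerivSub c Q ν = 0) (x : ℝ) : expPoly s Q x ≠ 0 := by
  have hothers : ∀ ν ∈ s, ν ≠ c → Q ν = 0 := fun ν hν hne =>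
    eq_zero_of_derivative_add_C_mul_eq_zero (sub_ne_zero.mpr hne) (hD ν hν)
  have hconst : Q c = C ((Q c).coeff 0) := by
    refine eq_C_of_natDegree_eq_zero (derivative_eq_zero.mp ?_)
    simpa [expPolyDerivSub] using hD c hc
  rw [expPoly, sum_eq_single_of_mem c hc fun ν hν hne => by simp [hothers ν hν hne], hconst,
    eval_C]
  exact mul_ne_zero (fun h => hQc (by rw [hconst, h, C_0])) (Real.exp_ne_zero _)

theorem exists_strictMono_deriv_eq_zero {F : ℝ → ℝ} (hF : Continuous F) {M : ℕ}
    {t : Fin (M + 1) → ℝ} (ht : StrictMono t) (hz : ∀ l, F (t l) = 0) :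
    ∃ t' : Fin M → ℝ, StrictMono t' ∧ ∀ i, deriv F (t' i) = 0 := by
  have hrolle : ∀ i : Fin M, ∃ c ∈ Set.Ioo (t i.castSucc) (t i.succ), deriv F c = 0 := fun i =>
    exists_deriv_eq_zero (ht i.castSucc_lt_succ) hF.continuousOn (by rw [hz, hz])
  choose t' ht' hd using hrolle
  refine ⟨t', fun i j hij => ?_, hd⟩
  calc t' i < t i.succ := (ht' i).2
    _ ≤ t j.castSucc := ht.monotone (Fin.succ_le_castSucc_iff.mpr hij)
    _ < t' j := (ht' j).1

theorem expPoly_coeff_eq_zero_of_weight_le {M : ℕ} {t : Fin M → ℝ} (ht : StrictMono t)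
    (hz : ∀ l, expPoly s Q (t l) = 0) (hw : expPolyWeight s Q ≤ M) : ∀ ν ∈ s, Q ν = 0 := by
  induction M generalizing Q with
  | zero =>
    intro ν hν
    exact polyWeight_eq_zero_iff.mp (sum_eq_zero_iff.mp (Nat.le_zero.mp hw) ν hν)
  | succ M ih =>
    by_contra! ⟨c, hc, hQc⟩
    have hderiv := hasDerivAt_exp_mul_expPoly (s := s) (Q := Q) c
    obtain ⟨t', ht', hz'⟩ := exists_strictMono_deriv_eq_zero
      (continuous_iff_continuousAt.mpr fun x => (hderiv x).continuousAt) ht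
      (fun l => by simp [hz l])
    have hD : ∀ ν ∈ s, expPolyDerivSub c Q ν = 0 := by
      refine ih ht' (fun i => ?_) ?_
      · simpa [(hderiv (t' i)).deriv, Real.exp_ne_zero] using hz' i
      · have := expPolyWeight_expPolyDerivSub_lt hc hQc; omega
    exact expPoly_ne_zero_of_expPolyDerivSub_eq_zero hc hQc hD (t 0) (hz 0)

end ExpPoly

section Extend

variable {ι α β : Type*} {f : ι → α}

theorem Finset.sum_extend_zero_of_injective {M : Type*} [Fintype ι] [Zero β] [AddCommMonoid M]
    (hf : Injective f) {s : Finset α} (hs : ∀ i, f i ∈ s) (g : ι → β) (φ : α → β → M)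
    (hφ : ∀ a, φ a 0 = 0) : ∑ a ∈ s, φ a (extend f g 0 a) = ∑ i, φ (f i) (g i) := by
  classical
  have hsub : univ.image f ⊆ s := fun a ha => by
    obtain ⟨i, -, rfl⟩ := mem_image.mp ha
    exact hs i
  have hout : ∀ a ∈ s, a ∉ univ.image f → φ a (extend f g 0 a) = 0 := fun a _ ha => by
    rw [extend_apply' _ _ _ fun ⟨i, hi⟩ => ha (hi ▸ mem_image_of_mem f (mem_univ i)),
      Pi.zero_apply, hφ]
  rw [← sum_subset hsub hout, sum_image fun i _ j _ h => hf h]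
  simp only [hf.extend_apply]

theorem expPoly_extend [Fintype ι] {μ : ι → ℝ} (hμ : Injective μ) {s : Finset ℝ}
    (hs : ∀ j, μ j ∈ s) (P : ι → ℝ[X]) (x : ℝ) :
    expPoly s (extend μ P 0) x = ∑ j, (P j).eval x * Real.exp (μ j * x) :=
  sum_extend_zero_of_injective hμ hs P (fun ν q => q.eval x * Real.exp (ν * x)) (by simp)

theorem expPolyWeight_extend [Fintype ι] {μ : ι → ℝ} (hμ : Injective μ) {s : Finset ℝ}
    (hs : ∀ j, μ j ∈ s) (P : ι → ℝ[X]) :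
    expPolyWeight s (extend μ P 0) = ∑ j, polyWeight (P j) :=
  sum_extend_zero_of_injective hμ hs P (fun _ q => polyWeight q) fun _ => polyWeight_zero

noncomputable def Function.Injective.neZeroEquivExtend [Zero β] (hf : Injective f) (g : ι → β) :
    {i // g i ≠ 0} ≃ {a // extend f g 0 a ≠ 0} :=
  Equiv.ofBijective (fun i => ⟨f i, by rw [hf.extend_apply]; exact i.2⟩) <| by
    refine ⟨fun i j h => Subtype.ext (hf (congrArg Subtype.val h)), fun ⟨a, ha⟩ => ?_⟩
    by_cases hrange : ∃ i, f i = a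
    · obtain ⟨i, rfl⟩ := hrange
      exact ⟨⟨i, by rwa [hf.extend_apply] at ha⟩, rfl⟩
    · exact absurd (extend_apply' g (0 : α → β) a hrange) ha

theorem exists_perm_of_extend_eq [Finite ι] [Zero β] {μ μ' : ι → α} (hμ : Injective μ)
    (hμ' : Injective μ') {P P' : ι → β} (h : extend μ P 0 = extend μ' P' 0) :
    ∃ σ : Equiv.Perm ι, (∀ j, P j = P' (σ j)) ∧ ∀ j, P j ≠ 0 → μ j = μ' (σ j) := by
  classical
  let e : {j // P j ≠ 0} ≃ {j // P' j ≠ 0} := (hμ.neZeroEquivExtend P).trans <|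
    (Equiv.subtypeEquivRight fun a => by rw [h]).trans (hμ'.neZeroEquivExtend P').symm
  have he : ∀ j : {j // P j ≠ 0}, μ' (e j) = μ j := fun j =>
    congrArg Subtype.val ((hμ'.neZeroEquivExtend P').apply_symm_apply _)
  have hmatch : ∀ j hj, μ j = μ' (e.extendSubtype j) := fun j hj => by
    rw [e.extendSubtype_apply_of_mem j hj, he]
  refine ⟨e.extendSubtype, fun j => ?_, hmatch⟩
  by_cases hj : P j ≠ 0
  · rw [← hμ.extend_apply P 0, hmatch j hj, h, hμ'.extend_apply]
  · rw [not_not.mp hj, not_not.mp (e.extendSubtype_not_mem j hj)]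

end Extend

theorem stmt_9_general (p T : ℕ) (m : Fin p → ℕ)
    (hT : 2 * (∑ j, m j) ≤ T)
    (t : Fin T → ℝ) (ht : StrictMono t)
    (μ μt : Fin p → ℝ) (hμ : Function.Injective μ) (hμt : Function.Injective μt)
    (P Pt : Fin p → Polynomial ℝ)
    (hP : ∀ j, (P j).natDegree < m j) (hPt : ∀ j, (Pt j).natDegree < m j)
    (hinterp : ∀ l : Fin T,
      (∑ j, (P j).eval (t l) * Real.exp (μ j * t l)) =
        ∑ j, (Pt j).eval (t l) * Real.exp (μt j * t l)) :
    ∃ σ : Equiv.Perm (Fin p),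
      (∀ j, P j = Pt (σ j)) ∧ ∀ j, P j ≠ 0 → μ j = μt (σ j) := by
  classical
  set s := univ.image μ ∪ univ.image μt
  have hμs : ∀ j, μ j ∈ s := fun j => mem_union_left _ (mem_image_of_mem μ (mem_univ j))
  have hμts : ∀ j, μt j ∈ s := fun j => mem_union_right _ (mem_image_of_mem μt (mem_univ j))
  have hzero : ∀ l, expPoly s (extend μ P 0 - extend μt Pt 0) (t l) = 0 := fun l => by
    rw [expPoly_sub, expPoly_extend hμ hμs, expPoly_extend hμt hμts, hinterp l, sub_self]
  have hweight : expPolyWeight s (extend μ P 0 - extend μt Pt 0) ≤ T := calc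
    _ ≤ expPolyWeight s (extend μ P 0) + expPolyWeight s (extend μt Pt 0) :=
        expPolyWeight_sub_le _ _
    _ = ∑ j, polyWeight (P j) + ∑ j, polyWeight (Pt j) := by
        rw [expPolyWeight_extend hμ hμs, expPolyWeight_extend hμt hμts]
    _ ≤ ∑ j, m j + ∑ j, m j := add_le_add
        (sum_le_sum fun j _ => polyWeight_le_of_natDegree_lt (hP j))
        (sum_le_sum fun j _ => polyWeight_le_of_natDegree_lt (hPt j))
    _ ≤ T := by omega
  have hcoeff := expPoly_coeff_eq_zero_of_weight_le ht hzero hweight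
  refine exists_perm_of_extend_eq hμ hμt (funext fun ν => ?_)
  by_cases hν : ν ∈ s
  · exact sub_eq_zero.mp (hcoeff ν hν)
  · rw [extend_apply' _ _ _ fun ⟨j, hj⟩ => hν (hj ▸ hμs j),
      extend_apply' _ _ _ fun ⟨j, hj⟩ => hν (hj ▸ hμts j)]

theorem stmt_9 (p T : ℕ) (m : Fin p → ℕ) (hm : ∀ j, 1 ≤ m j)
    (hT : 2 * (∑ j, m j) ≤ T)
    (t : Fin T → ℝ) (ht : StrictMono t)
    (μ μt : Fin p → ℝ) (hμ : Function.Injective μ) (hμt : Function.Injective μt)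
    (P Pt : Fin p → Polynomial ℝ)
    (hP : ∀ j, (P j).natDegree < m j) (hPt : ∀ j, (Pt j).natDegree < m j)
    (hinterp : ∀ l : Fin T,
      (∑ j, (P j).eval (t l) * Real.exp (μ j * t l)) =
        ∑ j, (Pt j).eval (t l) * Real.exp (μt j * t l)) :
    ∃ σ : Equiv.Perm (Fin p),
      (∀ j, P j = Pt (σ j)) ∧ ∀ j, P j ≠ 0 → μ j = μt (σ j) :=
  stmt_9_general p T m hT t ht μ μt hμ hμt P Pt hP hPt hinterp
end

section
/- Let k2, k3, k4, k̃2, k̃3, k̃4 > 0 with α1 + α2 = -(k2+k3+k4), α1·α2 = k2·k4, α̃1 + α̃2 = -(k̃2+k̃3+k̃4), α̃1·α̃2 = k̃2·k̃4. If {α1, α2} = {α̃1, α̃2} and k3 + k4 = k̃3 + k̃4, then k2 = k̃2, k3 = k̃3, and k4 = k̃4. -/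
/-! The set `{α1, α2}` determines the sum and product of the roots. Subtracting `k3 + k4` from
minus the sum recovers `k2`, dividing the product by `k2` recovers `k4`, and then `k3` follows. -/

theorem Set.add_eq_add_and_mul_eq_mul_of_pair_eq {R : Type*} [CommSemiring R] {a b c d : R}
    (h : ({a, b} : Set R) = {c, d}) : a + b = c + d ∧ a * b = c * d := by
  rcases Set.pair_eq_pair_iff.mp h with ⟨rfl, rfl⟩ | ⟨rfl, rfl⟩
  · exact ⟨rfl, rfl⟩
  · exact ⟨add_comm a b, mul_comm a b⟩

theorem stmt_16_general (k2 k3 k4 tk2 tk3 tk4 : ℝ)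
    (h2 : 0 < k2)
    (α1 α2 tα1 tα2 : ℝ)
    (hsum : α1 + α2 = -(k2 + k3 + k4)) (hprod : α1 * α2 = k2 * k4)
    (htsum : tα1 + tα2 = -(tk2 + tk3 + tk4)) (htprod : tα1 * tα2 = tk2 * tk4)
    (hset : ({α1, α2} : Set ℝ) = {tα1, tα2})
    (h34 : k3 + k4 = tk3 + tk4) :
    k2 = tk2 ∧ k3 = tk3 ∧ k4 = tk4 := by
  obtain ⟨hS, hP⟩ := Set.add_eq_add_and_mul_eq_mul_of_pair_eq hset
  obtain rfl : k2 = tk2 := by linarith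
  have e4 : k4 = tk4 := mul_left_cancel₀ h2.ne' (by rw [← hprod, ← htprod, hP])
  exact ⟨rfl, by linarith, e4⟩

theorem stmt_16 (k2 k3 k4 tk2 tk3 tk4 : ℝ)
    (h2 : 0 < k2) (h3 : 0 < k3) (h4 : 0 < k4)
    (th2 : 0 < tk2) (th3 : 0 < tk3) (th4 : 0 < tk4)
    (α1 α2 tα1 tα2 : ℝ)
    (hsum : α1 + α2 = -(k2 + k3 + k4)) (hprod : α1 * α2 = k2 * k4)
    (htsum : tα1 + tα2 = -(tk2 + tk3 + tk4)) (htprod : tα1 * tα2 = tk2 * tk4)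
    (hset : ({α1, α2} : Set ℝ) = {tα1, tα2})
    (h34 : k3 + k4 = tk3 + tk4) :
    k2 = tk2 ∧ k3 = tk3 ∧ k4 = tk4 :=
  stmt_16_general k2 k3 k4 tk2 tk3 tk4 h2 α1 α2 tα1 tα2 hsum hprod htsum htprod hset h34
end
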